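/- arXiv:2604.16002 — 5 statements merged into one kernel-verified Lean document; each statement's English description precedes it below -/
import Mathlib

section
/- Let λ ∈ ℂ with |λ| < 1 and let (aₙ) be a complex sequence. Define bₙ = Σ_{k=1}^n λ^{n−k} a_k. Then for every N ≥ 1, (Σ_{n=1}^N |aₙ|²)^{1/2} ≤ (1+|λ|)·(Σ_{n=1}^N |bₙ|²)^{1/2} + (|λ|/(1−|λ|))·max_{1≤n≤N} |aₙ|. -/
/-! Since `bₙ₊₁ = aₙ₊₁ + λ bₙ` and `b₀ = 0`, the vector `(aₙ)` is `(bₙ)` minus `λ` times its shift,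
and the shift does not increase the `ℓ²` norm. Minkowski then gives `‖a‖₂ ≤ (1 + |λ|) ‖b‖₂`;
the remaining term is nonnegative. -/

open Finset

lemma sum_Icc_pow_sub_mul_succ {R : Type*} [CommSemiring R] (c : R) (a : ℕ → R) (n : ℕ) :
    ∑ k ∈ Icc 1 (n + 1), c ^ (n + 1 - k) * a k
      = a (n + 1) + c * ∑ k ∈ Icc 1 n, c ^ (n - k) * a k := by
  rw [sum_Icc_succ_top (Nat.le_add_left 1 n), Nat.sub_self, pow_zero, one_mul, mul_sum,
    add_comm]
  congr 1
  refine sum_congr rfl fun k hk => ?_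
  rw [show n + 1 - k = n - k + 1 by grind, pow_succ']
  ring

lemma sum_Icc_one_eq_sum_range {M : Type*} [AddCommMonoid M] (f : ℕ → M) (N : ℕ) :
    ∑ n ∈ Icc 1 N, f n = ∑ n ∈ range N, f (n + 1) := by
  rw [range_eq_Ico, sum_Ico_add', ← Ico_add_one_right_eq_Icc, zero_add]

lemma sum_range_le_sum_range_succ (f : ℕ → ℝ) {N : ℕ} (h : f 0 ≤ f N) :
    ∑ n ∈ range N, f n ≤ ∑ n ∈ range N, f (n + 1) := by
  have := (sum_range_succ f N).symm.trans (sum_range_succ' f N)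
  linarith

section Minkowski

variable {ι E : Type*} [SeminormedAddCommGroup E]

lemma norm_toLp_restrict (s : Finset ι) (f : ι → E) :
    ‖(WithLp.toLp 2 (fun i : s => f i) : PiLp 2 fun _ : s => E)‖
      = √(∑ i ∈ s, ‖f i‖ ^ 2) := by
  rw [PiLp.norm_eq_of_L2, sum_coe_sort s fun i => ‖f i‖ ^ 2]

lemma sqrt_sum_norm_sq_sub_smul_le {𝕜 : Type*} [NormedField 𝕜] [NormedSpace 𝕜 E]
    (s : Finset ι) (f g : ι → E) (c : 𝕜) :
    √(∑ i ∈ s, ‖f i - c • g i‖ ^ 2)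
      ≤ √(∑ i ∈ s, ‖f i‖ ^ 2) + ‖c‖ * √(∑ i ∈ s, ‖g i‖ ^ 2) := by
  simp only [← norm_toLp_restrict]
  rw [← norm_smul]
  exact norm_sub_le (WithLp.toLp 2 fun i : s => f i) (c • WithLp.toLp 2 fun i : s => g i)

end Minkowski

lemma sqrt_sum_norm_sq_le_of_eq_sub_smul {𝕜 E : Type*} [NormedField 𝕜]
    [SeminormedAddCommGroup E] [NormedSpace 𝕜 E] {a b : ℕ → E} {c : 𝕜} (hb0 : b 0 = 0)
    (hab : ∀ n, a (n + 1) = b (n + 1) - c • b n) (N : ℕ) :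
    √(∑ n ∈ Icc 1 N, ‖a n‖ ^ 2) ≤ (1 + ‖c‖) * √(∑ n ∈ Icc 1 N, ‖b n‖ ^ 2) := by
  simp only [sum_Icc_one_eq_sum_range, hab]
  have hshift : ∑ n ∈ range N, ‖b n‖ ^ 2 ≤ ∑ n ∈ range N, ‖b (n + 1)‖ ^ 2 :=
    sum_range_le_sum_range_succ _ (by simp [hb0])
  calc √(∑ n ∈ range N, ‖b (n + 1) - c • b n‖ ^ 2)
      ≤ √(∑ n ∈ range N, ‖b (n + 1)‖ ^ 2) + ‖c‖ * √(∑ n ∈ range N, ‖b n‖ ^ 2) :=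
        sqrt_sum_norm_sq_sub_smul_le _ _ _ c
    _ ≤ √(∑ n ∈ range N, ‖b (n + 1)‖ ^ 2) + ‖c‖ * √(∑ n ∈ range N, ‖b (n + 1)‖ ^ 2) := by
        gcongr
    _ = (1 + ‖c‖) * √(∑ n ∈ range N, ‖b (n + 1)‖ ^ 2) := by ring

theorem stmt_3 (lam : ℂ) (hlam : ‖lam‖ < 1) (a b : ℕ → ℂ)
    (hb : ∀ n, b n = ∑ k ∈ Finset.Icc 1 n, lam ^ (n - k) * a k)
    (N : ℕ) (hN : 1 ≤ N) :
    Real.sqrt (∑ n ∈ Finset.Icc 1 N, ‖a n‖ ^ 2)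
      ≤ (1 + ‖lam‖) * Real.sqrt (∑ n ∈ Finset.Icc 1 N, ‖b n‖ ^ 2)
        + (‖lam‖ / (1 - ‖lam‖)) *
          ((Finset.Icc 1 N).sup' (Finset.nonempty_Icc.mpr hN) (fun n => ‖a n‖)) := by
  have hrec : ∀ n, a (n + 1) = b (n + 1) - lam • b n := fun n => by
    rw [hb, hb, sum_Icc_pow_sub_mul_succ, smul_eq_mul]
    ring
  have hmain := sqrt_sum_norm_sq_le_of_eq_sub_smul (by simp [hb]) hrec N
  have hsup : 0 ≤ (Icc 1 N).sup' (nonempty_Icc.mpr hN) (fun n => ‖a n‖) :=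
    (norm_nonneg (a 1)).trans (le_sup' (fun n => ‖a n‖) (mem_Icc.mpr ⟨le_rfl, hN⟩))
  have hcoef : 0 ≤ ‖lam‖ / (1 - ‖lam‖) := div_nonneg (norm_nonneg _) (by linarith)
  linarith [mul_nonneg hcoef hsup]
end

section
/- Let λ ∈ ℂ with |λ| < 1 and let (aₙ) be a complex sequence with Σ_{n=1}^∞ |aₙ|² = ∞ and max_{1≤n≤N} |aₙ|² / Σ_{n=1}^N |aₙ|² → 0 as N → ∞. Define bₙ = Σ_{k=1}^n λ^{n−k} a_k. Then max_{1≤n≤N} |bₙ|² / Σ_{n=1}^N |bₙ|² → 0 as N → ∞. -/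
/-!
Write `r = ‖λ‖` and `b = geomConv λ a`, so that `b₀ = 0` and `bₙ = aₙ + λ bₙ₋₁`. Two comparisons
hold for every `N`. Inducting on the recurrence, `|bₙ| ≤ max_{k ≤ N} |aₖ| / (1 - r)` for `n ≤ N`, so
the maxima satisfy `max |bₙ|² ≤ max |aₙ|² / (1 - r)²`. In the other direction
`aₙ = bₙ - λ bₙ₋₁` gives `|aₙ|² ≤ 2 |bₙ|² + 2 r² |bₙ₋₁|²`, and summing,
`Σ |aₙ|² ≤ 2 (1 + r²) Σ |bₙ|²`. Hence the Lindeberg ratio of `b` is at most a constant multiple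
of that of `a`, and it tends to `0`.
-/

open Filter Finset

section PartialMaxSum

def partialMax (f : ℕ → ℝ) (N : ℕ) : ℝ :=
  (Icc 1 (N + 1)).sup' (nonempty_Icc.mpr (Nat.le_add_left 1 N)) f

def partialSum (f : ℕ → ℝ) (N : ℕ) : ℝ :=
  ∑ n ∈ Icc 1 (N + 1), f n

variable {f : ℕ → ℝ}

lemma partialSum_eq_sum_range (f : ℕ → ℝ) (N : ℕ) :
    partialSum f N = ∑ i ∈ range (N + 1), f (i + 1) := by
  rw [partialSum, ← Finset.Ico_add_one_right_eq_Icc, sum_Ico_eq_sum_range]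
  simp only [add_tsub_cancel_right, add_comm 1]

lemma partialSum_nonneg (hf : 0 ≤ f) (N : ℕ) : 0 ≤ partialSum f N :=
  sum_nonneg fun n _ => hf n

lemma partialMax_nonneg (hf : 0 ≤ f) (N : ℕ) : 0 ≤ partialMax f N :=
  (hf 1).trans (le_sup' f (mem_Icc.mpr ⟨le_rfl, Nat.le_add_left 1 N⟩))

lemma partialMax_le_partialSum (hf : 0 ≤ f) (N : ℕ) : partialMax f N ≤ partialSum f N :=
  sup'_le _ _ fun _ hn => single_le_sum (fun n _ => hf n) hn

end PartialMaxSum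

section GeomConv

variable {𝕜 : Type*} [NormedDivisionRing 𝕜]

def geomConv (lam : 𝕜) (a : ℕ → 𝕜) (n : ℕ) : 𝕜 :=
  ∑ k ∈ Icc 1 n, lam ^ (n - k) * a k

variable (lam : 𝕜) (a : ℕ → 𝕜)

@[simp]
lemma geomConv_zero : geomConv lam a 0 = 0 := by
  simp [geomConv]

lemma geomConv_succ (n : ℕ) : geomConv lam a (n + 1) = a (n + 1) + lam * geomConv lam a n := by
  rw [geomConv, geomConv, sum_Icc_succ_top (Nat.le_add_left 1 n), mul_sum, Nat.sub_self,
    pow_zero, one_mul, add_comm]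
  congr 1
  refine sum_congr rfl fun k hk => ?_
  rw [Nat.sub_add_comm (mem_Icc.mp hk).2, pow_succ', mul_assoc]

variable {lam a}

lemma norm_geomConv_le {A : ℝ} {N : ℕ} (hlam : ‖lam‖ < 1) (hA : 0 ≤ A)
    (ha : ∀ k ∈ Icc 1 N, ‖a k‖ ≤ A) {n : ℕ} (hn : n ≤ N) :
    ‖geomConv lam a n‖ ≤ A / (1 - ‖lam‖) := by
  have hr : 0 < 1 - ‖lam‖ := sub_pos.mpr hlam
  induction n with
  | zero => simpa using div_nonneg hA hr.le
  | succ n ih =>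
    have hb := ih (by omega)
    have ha' := ha (n + 1) (mem_Icc.mpr ⟨Nat.le_add_left 1 n, hn⟩)
    calc ‖geomConv lam a (n + 1)‖ ≤ A + ‖lam‖ * (A / (1 - ‖lam‖)) := by
          rw [geomConv_succ]
          refine (norm_add_le _ _).trans (add_le_add ha' ?_)
          rw [norm_mul]
          exact mul_le_mul_of_nonneg_left hb (norm_nonneg lam)
      _ = A / (1 - ‖lam‖) := by field_simp; ring

lemma partialMax_geomConv_le (hlam : ‖lam‖ < 1) (N : ℕ) :
    partialMax (‖geomConv lam a ·‖ ^ 2) N ≤ partialMax (‖a ·‖ ^ 2) N / (1 - ‖lam‖) ^ 2 := by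
  have hM := partialMax_nonneg (fun n => sq_nonneg ‖a n‖) N
  refine sup'_le _ _ fun n hn => ?_
  have hA : ∀ k ∈ Icc 1 (N + 1), ‖a k‖ ≤ √(partialMax (‖a ·‖ ^ 2) N) := fun k hk =>
    Real.le_sqrt_of_sq_le (le_sup' (‖a ·‖ ^ 2) hk)
  calc ‖geomConv lam a n‖ ^ 2 ≤ (√(partialMax (‖a ·‖ ^ 2) N) / (1 - ‖lam‖)) ^ 2 :=
        pow_le_pow_left₀ (norm_nonneg _)
          (norm_geomConv_le hlam (Real.sqrt_nonneg _) hA (mem_Icc.mp hn).2) 2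
    _ = partialMax (‖a ·‖ ^ 2) N / (1 - ‖lam‖) ^ 2 := by rw [div_pow, Real.sq_sqrt hM]

lemma partialSum_le_mul_partialSum_geomConv (N : ℕ) :
    partialSum (‖a ·‖ ^ 2) N ≤ 2 * (1 + ‖lam‖ ^ 2) * partialSum (‖geomConv lam a ·‖ ^ 2) N := by
  set b := geomConv lam a
  have hpoint : ∀ i, ‖a (i + 1)‖ ^ 2 ≤ 2 * ‖b (i + 1)‖ ^ 2 + 2 * ‖lam‖ ^ 2 * ‖b i‖ ^ 2 := by
    intro i
    have h : ‖a (i + 1)‖ ≤ ‖b (i + 1)‖ + ‖lam‖ * ‖b i‖ := by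
      rw [← norm_mul, eq_sub_of_add_eq (geomConv_succ lam a i).symm]
      exact norm_sub_le _ _
    calc ‖a (i + 1)‖ ^ 2 ≤ (‖b (i + 1)‖ + ‖lam‖ * ‖b i‖) ^ 2 :=
          pow_le_pow_left₀ (norm_nonneg _) h 2
      _ ≤ 2 * (‖b (i + 1)‖ ^ 2 + (‖lam‖ * ‖b i‖) ^ 2) := add_sq_le
      _ = 2 * ‖b (i + 1)‖ ^ 2 + 2 * ‖lam‖ ^ 2 * ‖b i‖ ^ 2 := by ring
  have hshift : ∑ i ∈ range (N + 1), ‖b i‖ ^ 2 ≤ ∑ i ∈ range (N + 1), ‖b (i + 1)‖ ^ 2 := by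
    rw [sum_range_succ', sum_range_succ]
    simp [b]
  rw [partialSum_eq_sum_range, partialSum_eq_sum_range]
  calc ∑ i ∈ range (N + 1), ‖a (i + 1)‖ ^ 2
      ≤ ∑ i ∈ range (N + 1), (2 * ‖b (i + 1)‖ ^ 2 + 2 * ‖lam‖ ^ 2 * ‖b i‖ ^ 2) :=
        sum_le_sum fun i _ => hpoint i
    _ = 2 * ∑ i ∈ range (N + 1), ‖b (i + 1)‖ ^ 2
          + 2 * ‖lam‖ ^ 2 * ∑ i ∈ range (N + 1), ‖b i‖ ^ 2 := by
        rw [sum_add_distrib, mul_sum, mul_sum]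
    _ ≤ 2 * (1 + ‖lam‖ ^ 2) * ∑ i ∈ range (N + 1), ‖b (i + 1)‖ ^ 2 := by
        nlinarith [mul_le_mul_of_nonneg_left hshift (by positivity : (0 : ℝ) ≤ 2 * ‖lam‖ ^ 2)]

end GeomConv

/-- The bound also covers `y' = 0`, where both sides vanish through `x / 0 = 0`. -/
lemma div_le_mul_mul_div {x y x' y' p q : ℝ} (hx : 0 ≤ x) (hx' : 0 ≤ x') (hx'y' : x' ≤ y')
    (hp : 0 ≤ p) (hq : 0 ≤ q) (hxp : x ≤ p * x') (hy'q : y' ≤ q * y) :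
    x / y ≤ p * q * (x' / y') := by
  rcases hx'.eq_or_lt with rfl | hx'pos
  · simp [le_antisymm (by simpa using hxp) hx]
  have hy' : 0 < y' := hx'pos.trans_le hx'y'
  have hy : 0 < y := pos_of_mul_pos_right (hy'.trans_le hy'q) hq
  rw [mul_div_assoc', div_le_div_iff₀ hy hy']
  calc x * y' ≤ p * x' * (q * y) := mul_le_mul hxp hy'q hy'.le (by positivity)
    _ = p * q * x' * y := by ring

theorem stmt_4_general (lam : ℂ) (hlam : ‖lam‖ < 1) (a b : ℕ → ℂ)
    (hb : ∀ n, b n = ∑ k ∈ Finset.Icc 1 n, lam ^ (n - k) * a k)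
    (haLind : Tendsto (fun N : ℕ =>
        ((Finset.Icc 1 (N + 1)).sup' (Finset.nonempty_Icc.mpr (Nat.le_add_left 1 N))
            (fun n => ‖a n‖ ^ 2))
          / ∑ n ∈ Finset.Icc 1 (N + 1), ‖a n‖ ^ 2) atTop (nhds 0)) :
    Tendsto (fun N : ℕ =>
        ((Finset.Icc 1 (N + 1)).sup' (Finset.nonempty_Icc.mpr (Nat.le_add_left 1 N))
            (fun n => ‖b n‖ ^ 2))
          / ∑ n ∈ Finset.Icc 1 (N + 1), ‖b n‖ ^ 2) atTop (nhds 0) := by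
  obtain rfl : b = geomConv lam a := funext hb
  change Tendsto (fun N => partialMax (‖a ·‖ ^ 2) N / partialSum (‖a ·‖ ^ 2) N) atTop (nhds 0)
    at haLind
  change Tendsto (fun N => partialMax (‖geomConv lam a ·‖ ^ 2) N
    / partialSum (‖geomConv lam a ·‖ ^ 2) N) atTop (nhds 0)
  have hsq : ∀ c : ℕ → ℂ, 0 ≤ (‖c ·‖ ^ 2) := fun c n => sq_nonneg ‖c n‖
  have hupper := haLind.const_mul (1 / (1 - ‖lam‖) ^ 2 * (2 * (1 + ‖lam‖ ^ 2)))
  rw [mul_zero] at hupper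
  refine tendsto_of_tendsto_of_tendsto_of_le_of_le tendsto_const_nhds hupper
    (fun N => div_nonneg (partialMax_nonneg (hsq _) N) (partialSum_nonneg (hsq _) N))
    (fun N => div_le_mul_mul_div (partialMax_nonneg (hsq _) N) (partialMax_nonneg (hsq _) N)
      (partialMax_le_partialSum (hsq _) N) (by positivity) (by positivity) ?_
      (partialSum_le_mul_partialSum_geomConv N))
  simpa [div_eq_inv_mul] using partialMax_geomConv_le hlam N

theorem stmt_4 (lam : ℂ) (hlam : ‖lam‖ < 1) (a b : ℕ → ℂ)
    (hb : ∀ n, b n = ∑ k ∈ Finset.Icc 1 n, lam ^ (n - k) * a k)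
    (ha : ¬ Summable (fun n => ‖a (n + 1)‖ ^ 2))
    (haLind : Tendsto (fun N : ℕ =>
        ((Finset.Icc 1 (N + 1)).sup' (Finset.nonempty_Icc.mpr (Nat.le_add_left 1 N))
            (fun n => ‖a n‖ ^ 2))
          / ∑ n ∈ Finset.Icc 1 (N + 1), ‖a n‖ ^ 2) atTop (nhds 0)) :
    Tendsto (fun N : ℕ =>
        ((Finset.Icc 1 (N + 1)).sup' (Finset.nonempty_Icc.mpr (Nat.le_add_left 1 N))
            (fun n => ‖b n‖ ^ 2))
          / ∑ n ∈ Finset.Icc 1 (N + 1), ‖b n‖ ^ 2) atTop (nhds 0) :=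
  stmt_4_general lam hlam a b hb haLind
end

section
/- Let Φ be the cumulative distribution function of the normal distribution N(0, 1/2), i.e., Φ(x) = (1/√π) ∫_{−∞}^x e^{−t²} dt. Then for all real p, q with 1/2 ≤ p ≤ 3/2 and −1 ≤ q ≤ 1, and all x ∈ ℝ: |Φ(px + q) − Φ(x)| ≤ 1.35·(|p − 1| + |q|). -/
noncomputable def Phi (x : ℝ) : ℝ :=
  (1 / Real.sqrt Real.pi) * ∫ t in Set.Iic x, Real.exp (-t ^ 2)

/-
Φ has derivative e^{-t²}/√π ≤ e^{-t²}, so a shift by q moves Φ by at most |q|. For the scaling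
x ↦ p x with p ≥ 1/2, every point t between x and p x satisfies |t| ≥ |x|/2, so the mean value
bound gives |Φ(p x) - Φ(x)| ≤ |p - 1| · |x| e^{-x²/4} ≤ |p - 1|, using e^{s} ≥ 1 + s.
-/

open Real Set

lemma integrable_exp_neg_sq : MeasureTheory.Integrable (fun t : ℝ => exp (-t ^ 2)) := by
  simpa using integrable_exp_neg_mul_sq (b := 1) one_pos

lemma Phi_sub_Phi (a b : ℝ) :
    Phi b - Phi a = (1 / √π) * ∫ t in a..b, exp (-t ^ 2) := by
  rw [Phi, Phi, ← mul_sub, intervalIntegral.integral_Iic_sub_Iic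
    integrable_exp_neg_sq.integrableOn integrable_exp_neg_sq.integrableOn]

lemma abs_Phi_sub_le {a b M : ℝ} (hM : ∀ t ∈ uIoc a b, exp (-t ^ 2) ≤ M) :
    |Phi b - Phi a| ≤ M * |b - a| := by
  have hint : |∫ t in a..b, exp (-t ^ 2)| ≤ M * |b - a| :=
    intervalIntegral.norm_integral_le_of_norm_le_const (f := fun t => exp (-t ^ 2)) fun t ht => by
      rw [norm_of_nonneg (exp_pos _).le]
      exact hM t ht
  have hsqrt : 1 ≤ √π := one_le_sqrt.mpr (by linarith [pi_gt_three])
  rw [Phi_sub_Phi, abs_mul, abs_of_pos (by positivity)]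
  exact (mul_le_of_le_one_left (abs_nonneg _) (div_le_one_of_le₀ hsqrt (sqrt_nonneg _))).trans hint

lemma abs_Phi_add_sub_le (y q : ℝ) : |Phi (y + q) - Phi y| ≤ |q| := by
  simpa using abs_Phi_sub_le (a := y) (b := y + q) (M := 1) fun t _ => by
    rw [exp_le_one_iff]; nlinarith

lemma abs_mul_exp_neg_sq_div_four_le_one (x : ℝ) : |x| * exp (-(x ^ 2 / 4)) ≤ 1 := by
  have hexp : 1 + x ^ 2 / 4 ≤ exp (x ^ 2 / 4) := by linarith [add_one_le_exp (x ^ 2 / 4)]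
  rw [exp_neg, ← div_eq_mul_inv, div_le_one (exp_pos _)]
  nlinarith [sq_nonneg (|x| - 2), sq_abs x]

lemma sq_div_four_le_sq_of_mem_uIoc_mul {p x t : ℝ} (hp : 1 / 2 ≤ p) (ht : t ∈ uIoc x (p * x)) :
    x ^ 2 / 4 ≤ t ^ 2 := by
  rw [mem_uIoc] at ht
  rcases le_total 0 x with hx | hx
  · have : x / 2 ≤ p * x := by nlinarith
    rcases ht with ⟨ht₁, ht₂⟩ | ⟨ht₁, ht₂⟩ <;> nlinarith
  · have : p * x ≤ x / 2 := by nlinarith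
    rcases ht with ⟨ht₁, ht₂⟩ | ⟨ht₁, ht₂⟩ <;> nlinarith

lemma abs_Phi_mul_sub_le {p : ℝ} (hp : 1 / 2 ≤ p) (x : ℝ) : |Phi (p * x) - Phi x| ≤ |p - 1| := by
  have h := abs_Phi_sub_le (a := x) (b := p * x) (M := exp (-(x ^ 2 / 4))) fun t ht => by
    rw [exp_le_exp, neg_le_neg_iff]
    exact sq_div_four_le_sq_of_mem_uIoc_mul hp ht
  calc |Phi (p * x) - Phi x| ≤ exp (-(x ^ 2 / 4)) * |p * x - x| := h
    _ = |p - 1| * (|x| * exp (-(x ^ 2 / 4))) := by rw [← sub_one_mul, abs_mul]; ring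
    _ ≤ |p - 1| * 1 := by gcongr; exact abs_mul_exp_neg_sq_div_four_le_one x
    _ = |p - 1| := mul_one _

theorem stmt_7_general (p q x : ℝ) (hp1 : 1 / 2 ≤ p) :
    |Phi (p * x + q) - Phi x| ≤ 1.35 * (|p - 1| + |q|) := by
  calc |Phi (p * x + q) - Phi x|
      ≤ |Phi (p * x + q) - Phi (p * x)| + |Phi (p * x) - Phi x| := abs_sub_le _ _ _
    _ ≤ |q| + |p - 1| := add_le_add (abs_Phi_add_sub_le _ _) (abs_Phi_mul_sub_le hp1 x)
    _ ≤ 1.35 * (|p - 1| + |q|) := by linarith [abs_nonneg q, abs_nonneg (p - 1)]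

theorem stmt_7 (p q x : ℝ) (hp1 : 1 / 2 ≤ p) (hp2 : p ≤ 3 / 2)
    (hq1 : -1 ≤ q) (hq2 : q ≤ 1) :
    |Phi (p * x + q) - Phi x| ≤ 1.35 * (|p - 1| + |q|) :=
  stmt_7_general p q x hp1
end

section
/- Let f : 𝔻 → 𝔻 be an inner function with f(0) = 0, inducing a Lebesgue-measure-preserving boundary map on 𝕋. Set λ = conj(f'(0)). Then for any integers n ≥ 1 and k ∈ ℤ, the inner product ⟨f^{∘n}, (f^{∘(n+1)})^k⟩ in L²(𝕋) equals λ if k = 1 and 0 otherwise. -/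
open MeasureTheory Filter

noncomputable def circleMeasure : Measure ℝ :=
  (ENNReal.ofReal (2 * Real.pi))⁻¹ • (volume.restrict (Set.Ioc 0 (2 * Real.pi)))

/-!
For `k ≤ 0` the integrand `Bₙ · conj (Bₙ₊₁ ^ k) = Bₙ · Bₙ₊₁ ^ (-k)` is the boundary function of
the bounded holomorphic function `fⁿ · (fⁿ⁺¹) ^ (-k)`, so its mean over the circle is the value
of that function at `0`, namely `0`. For `k ≥ 1` one conjugates:
`conj Bₙ · Bₙ₊₁ ^ k = Bₙ ^ (k - 1) · (Bₙ₊₁ / Bₙ) ^ k` is the boundary function of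
`(fⁿ) ^ (k - 1) · (ψ ∘ fⁿ) ^ k`, where `ψ = dslope f 0` is the Schwarz quotient `f z / z`,
and its value at `0` is `0 ^ (k - 1) · f'(0) ^ k`.
-/

open Metric Complex Set Topology Real ComplexConjugate

instance : IsFiniteMeasure circleMeasure :=
  Measure.smul_finite _ (by simp [Real.pi_pos])

theorem ofReal_mul_exp_mem_ball {r : ℝ} (hr : |r| < 1) (θ : ℝ) :
    (r : ℂ) * Complex.exp ((θ : ℂ) * I) ∈ ball (0 : ℂ) 1 := by
  simpa [norm_exp_ofReal_mul_I] using hr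

def HasRadialLimitsAE {E : Type*} [TopologicalSpace E] (u : ℂ → E) (V : ℝ → E) : Prop :=
  ∀ᵐ θ : ℝ ∂circleMeasure,
    Tendsto (fun r : ℝ => u ((r : ℂ) * Complex.exp ((θ : ℂ) * I))) (𝓝[<] 1) (𝓝 (V θ))

theorem HasRadialLimitsAE.congr_ae {E : Type*} [TopologicalSpace E] {u : ℂ → E} {V V' : ℝ → E}
    (hV : HasRadialLimitsAE u V) (h : V =ᵐ[circleMeasure] V') : HasRadialLimitsAE u V' := by
  filter_upwards [hV, h] with θ hθ hVθ
  rwa [← hVθ]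

section

variable {E : Type*} [NormedAddCommGroup E] [NormedSpace ℂ E]

theorem integral_circleMeasure_eq_circleAverage (u : ℂ → E) (r : ℝ) :
    ∫ θ, u ((r : ℂ) * Complex.exp ((θ : ℂ) * I)) ∂circleMeasure = circleAverage u 0 r := by
  rw [circleMeasure, integral_smul_measure, circleAverage_def,
    intervalIntegral.integral_of_le (by positivity), ENNReal.toReal_inv,
    ENNReal.toReal_ofReal (by positivity)]
  simp [circleMap]

variable [CompleteSpace E] {u : ℂ → E}

theorem DifferentiableOn.integral_circleMeasure_eq (hu : DifferentiableOn ℂ u (ball 0 1))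
    {r : ℝ} (hr : |r| < 1) :
    ∫ θ : ℝ, u ((r : ℂ) * Complex.exp ((θ : ℂ) * I)) ∂circleMeasure = u 0 := by
  rw [integral_circleMeasure_eq_circleAverage]
  exact (hu.diffContOnCl_ball (closedBall_subset_ball hr)).circleAverage

/-- The mean value property passes to the boundary by dominated convergence. -/
theorem HasRadialLimitsAE.integral_eq {V : ℝ → E} (hV : HasRadialLimitsAE u V)
    (hu : DifferentiableOn ℂ u (ball 0 1)) {C : ℝ} (hC : ∀ z ∈ ball (0 : ℂ) 1, ‖u z‖ ≤ C) :
    ∫ θ, V θ ∂circleMeasure = u 0 := by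
  have hr : ∀ᶠ r in 𝓝[<] (1 : ℝ), |r| < 1 :=
    mem_of_superset (Ioo_mem_nhdsLT (by norm_num : (-1 : ℝ) < 1)) fun r hr => abs_lt.2 hr
  refine tendsto_nhds_unique (tendsto_integral_filter_of_dominated_convergence (fun _ => C)
    ?_ ?_ (integrable_const C) hV) (tendsto_const_nhds.congr' ?_)
  · filter_upwards [hr] with r hr
    exact (hu.continuousOn.comp_continuous (by fun_prop)
      (ofReal_mul_exp_mem_ball hr)).aestronglyMeasurable
  · filter_upwards [hr] with r hr
    exact ae_of_all _ fun θ => hC _ (ofReal_mul_exp_mem_ball hr θ)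
  · filter_upwards [hr] with r hr
    exact (hu.integral_circleMeasure_eq hr).symm

end

namespace HasRadialLimitsAE

variable {u v : ℂ → ℂ} {U V : ℝ → ℂ}

theorem mul (hU : HasRadialLimitsAE u U) (hV : HasRadialLimitsAE v V) :
    HasRadialLimitsAE (u * v) (U * V) := by
  filter_upwards [hU, hV] with θ hUθ hVθ
  exact hUθ.mul hVθ

theorem pow (hU : HasRadialLimitsAE u U) (m : ℕ) :
    HasRadialLimitsAE (u ^ m) (U ^ m) := by
  filter_upwards [hU] with θ hUθ
  exact hUθ.pow m

/-- Where the boundary values of `g` do not vanish, those of `dslope f 0 ∘ g` are read off from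
`f (g z) = g z * dslope f 0 (g z)`. -/
theorem dslope_comp {f : ℂ → ℂ} (hf0 : f 0 = 0) (hU : HasRadialLimitsAE u U)
    (hfU : HasRadialLimitsAE (f ∘ u) V) (hU0 : ∀ᵐ θ ∂circleMeasure, U θ ≠ 0) :
    HasRadialLimitsAE (dslope f 0 ∘ u) (V / U) := by
  filter_upwards [hU, hfU, hU0] with θ hUθ hVθ hθ
  refine (hVθ.div hUθ hθ).congr' ((hUθ.eventually_ne hθ).mono fun r hr => ?_)
  simp [dslope_of_ne f hr, slope_def_field, hf0]

end HasRadialLimitsAE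

variable {f g : ℂ → ℂ} {G F : ℝ → ℂ}

theorem integral_mul_conj_zpow_of_nonpos (hg : DifferentiableOn ℂ g (ball 0 1))
    (hg_maps : MapsTo g (ball 0 1) (ball 0 1)) (hg0 : g 0 = 0)
    (hf : DifferentiableOn ℂ f (ball 0 1)) (hf_maps : MapsTo f (ball 0 1) (ball 0 1))
    (hG : HasRadialLimitsAE g G) (hF : HasRadialLimitsAE f F)
    (hF1 : ∀ᵐ θ ∂circleMeasure, ‖F θ‖ = 1) {k : ℤ} (hk : k ≤ 0) :
    ∫ θ, G θ * conj (F θ ^ k) ∂circleMeasure = 0 := by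
  obtain ⟨m, rfl⟩ : ∃ m : ℕ, k = -m := ⟨(-k).toNat, by omega⟩
  have hlim : HasRadialLimitsAE (g * f ^ m) (fun θ => G θ * conj (F θ ^ (-m : ℤ))) := by
    refine (hG.mul (hF.pow m)).congr_ae ?_
    filter_upwards [hF1] with θ hθ
    simp [← RCLike.inv_eq_conj hθ]
  have hbound : ∀ z ∈ ball (0 : ℂ) 1, ‖(g * f ^ m) z‖ ≤ 1 := fun z hz => by
    simp only [Pi.mul_apply, Pi.pow_apply, norm_mul, norm_pow]
    exact mul_le_one₀ (mem_ball_zero_iff.1 (hg_maps hz)).le (by positivity)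
      (pow_le_one₀ (norm_nonneg _) (mem_ball_zero_iff.1 (hf_maps hz)).le)
  rw [hlim.integral_eq (hg.mul (hf.pow m)) hbound]
  simp [hg0]

theorem integral_mul_conj_zpow_of_pos (hf : DifferentiableOn ℂ f (ball 0 1))
    (hf_maps : MapsTo f (ball 0 1) (ball 0 1)) (hf0 : f 0 = 0)
    (hg : DifferentiableOn ℂ g (ball 0 1)) (hg_maps : MapsTo g (ball 0 1) (ball 0 1))
    (hg0 : g 0 = 0) (hG : HasRadialLimitsAE g G) (hF : HasRadialLimitsAE (f ∘ g) F)
    (hG1 : ∀ᵐ θ ∂circleMeasure, ‖G θ‖ = 1) {k : ℤ} (hk : 0 < k) :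
    ∫ θ, G θ * conj (F θ ^ k) ∂circleMeasure = if k = 1 then conj (deriv f 0) else 0 := by
  obtain ⟨m, rfl⟩ : ∃ m : ℕ, k = m + 1 := ⟨(k - 1).toNat, by omega⟩
  set ψ := dslope f 0
  have hψ : DifferentiableOn ℂ ψ (ball 0 1) :=
    (differentiableOn_dslope (ball_mem_nhds 0 one_pos)).2 hf
  have hψ_le : ∀ w ∈ ball (0 : ℂ) 1, ‖ψ w‖ ≤ 1 := fun w hw => by
    simpa using norm_dslope_le_div_of_mapsTo_ball hf
      (by rw [hf0]; exact hf_maps.mono_right ball_subset_closedBall) hw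
  have hG0 : ∀ᵐ θ ∂circleMeasure, G θ ≠ 0 :=
    hG1.mono fun θ hθ => norm_ne_zero_iff.1 (by rw [hθ]; exact one_ne_zero)
  have hlim : HasRadialLimitsAE (g ^ m * (ψ ∘ g) ^ (m + 1))
      (fun θ => conj (G θ * conj (F θ ^ ((m : ℤ) + 1)))) := by
    refine (hG.pow m |>.mul ((hG.dslope_comp hf0 hF hG0).pow (m + 1))).congr_ae ?_
    filter_upwards [hG1, hG0] with θ hGθ hGθ0
    simp only [Pi.mul_apply, Pi.pow_apply, Pi.div_apply, map_mul, conj_conj,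
      ← RCLike.inv_eq_conj hGθ]
    rw [← Nat.cast_succ, zpow_natCast]
    field_simp
    rw [div_pow, ← pow_succ, mul_div_cancel₀ _ (pow_ne_zero _ hGθ0)]
  have hbound : ∀ z ∈ ball (0 : ℂ) 1, ‖(g ^ m * (ψ ∘ g) ^ (m + 1)) z‖ ≤ 1 := fun z hz => by
    simp only [Pi.mul_apply, Pi.pow_apply, Function.comp_apply, norm_mul, norm_pow]
    exact mul_le_one₀ (pow_le_one₀ (norm_nonneg _) (mem_ball_zero_iff.1 (hg_maps hz)).le)
      (by positivity) (pow_le_one₀ (norm_nonneg _) (hψ_le _ (hg_maps hz)))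
  have hmean := hlim.integral_eq ((hg.pow m).mul ((hψ.comp hg hg_maps).pow (m + 1))) hbound
  rw [← conj_conj (∫ θ, G θ * _ ∂circleMeasure), ← integral_conj, hmean]
  rcases eq_or_ne m 0 with rfl | hm
  · simp [hg0, ψ, dslope_same]
  · simp [hg0, hm, zero_pow hm]

theorem stmt_10_general (f : ℂ → ℂ)
    (hf : DifferentiableOn ℂ f (Metric.ball 0 1))
    (hmaps : Set.MapsTo f (Metric.ball 0 1) (Metric.ball 0 1))
    (hf0 : f 0 = 0)
    (B : ℕ → ℝ → ℂ)
    (hBlim : ∀ n, 1 ≤ n → ∀ᵐ (θ : ℝ) ∂circleMeasure,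
      Tendsto (fun r : ℝ => f^[n] ((r : ℂ) * Complex.exp ((θ : ℂ) * Complex.I)))
        (nhdsWithin 1 (Set.Iio 1)) (nhds (B n θ)))
    (hBinner : ∀ n, 1 ≤ n → ∀ᵐ (θ : ℝ) ∂circleMeasure, ‖B n θ‖ = 1)
    (lam : ℂ) (hlam : lam = starRingEnd ℂ (deriv f 0))
    (n : ℕ) (hn : 1 ≤ n) (k : ℤ) :
    ∫ θ, B n θ * starRingEnd ℂ ((B (n + 1) θ) ^ k) ∂circleMeasure
      = if k = 1 then lam else 0 := by
  have hB : HasRadialLimitsAE f^[n] (B n) := hBlim n hn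
  have hB' : HasRadialLimitsAE (f ∘ f^[n]) (B (n + 1)) := by
    rw [← Function.iterate_succ']
    exact hBlim (n + 1) (by omega)
  rcases le_or_gt k 0 with hk | hk
  · rw [if_neg (by omega)]
    exact integral_mul_conj_zpow_of_nonpos (hf.iterate hmaps n) (hmaps.iterate n)
      (Function.iterate_fixed hf0 n) (hf.iterate hmaps (n + 1)) (hmaps.iterate (n + 1)) hB
      (hBlim (n + 1) (by omega)) (hBinner (n + 1) (by omega)) hk
  · rw [hlam]
    exact integral_mul_conj_zpow_of_pos hf hmaps hf0 (hf.iterate hmaps n) (hmaps.iterate n)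
      (Function.iterate_fixed hf0 n) hB hB' (hBinner n hn) hk

theorem stmt_10 (f : ℂ → ℂ)
    (hf : DifferentiableOn ℂ f (Metric.ball 0 1))
    (hmaps : Set.MapsTo f (Metric.ball 0 1) (Metric.ball 0 1))
    (hf0 : f 0 = 0)
    (B : ℕ → ℝ → ℂ)
    (hBmeas : ∀ n, Measurable (B n))
    (hBlim : ∀ n, 1 ≤ n → ∀ᵐ (θ : ℝ) ∂circleMeasure,
      Tendsto (fun r : ℝ => f^[n] ((r : ℂ) * Complex.exp ((θ : ℂ) * Complex.I)))
        (nhdsWithin 1 (Set.Iio 1)) (nhds (B n θ)))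
    (hBinner : ∀ n, 1 ≤ n → ∀ᵐ (θ : ℝ) ∂circleMeasure, ‖B n θ‖ = 1)
    (lam : ℂ) (hlam : lam = starRingEnd ℂ (deriv f 0))
    (n : ℕ) (hn : 1 ≤ n) (k : ℤ) :
    ∫ θ, B n θ * starRingEnd ℂ ((B (n + 1) θ) ^ k) ∂circleMeasure
      = if k = 1 then lam else 0 :=
  stmt_10_general f hf hmaps hf0 B hBlim hBinner lam hlam n hn k
end

section
/- Let f be an inner function with f(0) = 0, set λ = conj(f'(0)), and Yₙ = f^{∘n} − λ f^{∘(n+1)} on 𝕋. Let 𝓕_{n+1} be the completed σ-algebra generated by f^{∘(n+1)}. Then E[Yₙ | 𝓕_{n+1}] = 0, i.e., (Yₙ) is a reverse martingale difference sequence with respect to the decreasing filtration (𝓕ₙ). -/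
/-
Write `F = f^[n]` and `ψ = dslope f 0 ∘ F`, so that `f^[n+1] = G := F ψ`, `‖ψ‖ ≤ 1` by the Schwarz
lemma and `λ = conj (ψ 0)`; let `b`, `c` be the boundary values of `F`, `G`. Each moment
`∫ (b - λ c) c^k` is, up to conjugation, the circle mean of the boundary values of a bounded
holomorphic function vanishing at `0`, hence is `0`: take `(F - λ G) G^k` for `k ≥ 0` and
`G^m (ψ - ψ 0)` for `k = -(m+1)`, using `|b| = |c| = 1`. Since `|c| = 1`, Stone–Weierstrass on the
circle extends this to `∫ (b - λ c) g(c) = 0` for bounded continuous `g`, and the density of these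
in `L¹` of the law of `c` extends it to indicators, which is the claim.
-/

open MeasureTheory Filter

open Complex Metric Set Topology ComplexConjugate BoundedContinuousFunction

instance : IsProbabilityMeasure circleMeasure := by
  constructor
  rw [circleMeasure, Measure.smul_apply, Measure.restrict_apply_univ, Real.volume_Ioc, sub_zero,
    smul_eq_mul, ENNReal.inv_mul_cancel (by simp [Real.pi_pos]) ENNReal.ofReal_ne_top]

theorem integral_circleMeasure {E : Type*} [NormedAddCommGroup E] [NormedSpace ℝ E] (g : ℝ → E) :
    ∫ θ, g θ ∂circleMeasure = (2 * Real.pi)⁻¹ • ∫ θ in 0..2 * Real.pi, g θ := by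
  rw [circleMeasure, integral_smul_measure, intervalIntegral.integral_of_le (by positivity),
    ENNReal.toReal_inv, ENNReal.toReal_ofReal (by positivity)]

def HasRadialLimits (H : ℂ → ℂ) (h : ℝ → ℂ) : Prop :=
  ∀ᵐ θ : ℝ ∂circleMeasure, Tendsto (fun r : ℝ => H (r * exp (θ * I))) (𝓝[<] 1) (𝓝 (h θ))

namespace HasRadialLimits

variable {F G H : ℂ → ℂ} {b c h : ℝ → ℂ}

theorem mul (hF : HasRadialLimits F b) (hG : HasRadialLimits G c) :
    HasRadialLimits (fun z => F z * G z) (fun θ => b θ * c θ) := by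
  filter_upwards [hF, hG] with θ hb hc using hb.mul hc

theorem sub (hF : HasRadialLimits F b) (hG : HasRadialLimits G c) :
    HasRadialLimits (fun z => F z - G z) (fun θ => b θ - c θ) := by
  filter_upwards [hF, hG] with θ hb hc using hb.sub hc

theorem const_mul (a : ℂ) (hF : HasRadialLimits F b) :
    HasRadialLimits (fun z => a * F z) (fun θ => a * b θ) := by
  filter_upwards [hF] with θ hb using hb.const_mul a

theorem pow (hF : HasRadialLimits F b) (m : ℕ) :
    HasRadialLimits (fun z => F z ^ m) (fun θ => b θ ^ m) := by
  filter_upwards [hF] with θ hb using hb.pow m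

theorem sub_const (hF : HasRadialLimits F b) (a : ℂ) :
    HasRadialLimits (fun z => F z - a) (fun θ => b θ - a) := by
  filter_upwards [hF] with θ hb using hb.sub_const a

theorem of_mul_left (hF : HasRadialLimits F b) (hb : ∀ᵐ θ ∂circleMeasure, b θ ≠ 0)
    (hFG : HasRadialLimits (fun z => F z * G z) c) :
    HasRadialLimits G (fun θ => c θ / b θ) := by
  filter_upwards [hF, hb, hFG] with θ hFθ hbθ hFGθ
  refine (hFGθ.div hFθ hbθ).congr' ?_
  filter_upwards [hFθ.eventually_ne hbθ] with r hr using mul_div_cancel_left₀ _ hr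

theorem integral_eq (hH : DifferentiableOn ℂ H (ball 0 1)) {C : ℝ}
    (hC : ∀ z ∈ ball (0 : ℂ) 1, ‖H z‖ ≤ C) (hh : HasRadialLimits H h) :
    ∫ θ, h θ ∂circleMeasure = H 0 := by
  have hball : ∀ r ∈ Ioo (0 : ℝ) 1, ∀ θ : ℝ, (r : ℂ) * exp (θ * I) ∈ ball (0 : ℂ) 1 := by
    intro r hr θ
    simpa [norm_exp_ofReal_mul_I, abs_of_pos hr.1] using hr.2
  have hIoo : ∀ᶠ r in 𝓝[<] (1 : ℝ), r ∈ Ioo 0 1 := Ioo_mem_nhdsLT zero_lt_one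
  have hlim := tendsto_integral_filter_of_dominated_convergence (fun _ => C)
    (hIoo.mono fun r hr => ((hH.continuousOn.comp_continuous (by fun_prop) (hball r hr))
      ).aestronglyMeasurable)
    (hIoo.mono fun r hr => ae_of_all _ fun θ => hC _ (hball r hr θ)) (integrable_const C) hh
  refine tendsto_nhds_unique hlim (tendsto_const_nhds.congr' ?_)
  filter_upwards [hIoo] with r hr
  have hcl : DiffContOnCl ℂ H (ball 0 |r|) :=
    hH.diffContOnCl_ball (closedBall_subset_ball (by rw [abs_of_pos hr.1]; exact hr.2))
  simpa [circleMap] using ((integral_circleMeasure _).trans hcl.circleAverage).symm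

end HasRadialLimits

theorem integral_sub_conj_mul_zpow_eq_zero {F ψ : ℂ → ℂ} {b c : ℝ → ℂ}
    (hF : DifferentiableOn ℂ F (ball 0 1)) (hF1 : ∀ z ∈ ball (0 : ℂ) 1, ‖F z‖ ≤ 1) (hF0 : F 0 = 0)
    (hψ : DifferentiableOn ℂ ψ (ball 0 1)) (hψ1 : ∀ z ∈ ball (0 : ℂ) 1, ‖ψ z‖ ≤ 1)
    (hb : HasRadialLimits F b) (hc : HasRadialLimits (fun z => F z * ψ z) c)
    (hb1 : ∀ᵐ θ ∂circleMeasure, ‖b θ‖ = 1) (hc1 : ∀ᵐ θ ∂circleMeasure, ‖c θ‖ = 1) (k : ℤ) :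
    ∫ θ, (b θ - conj (ψ 0) * c θ) * c θ ^ k ∂circleMeasure = 0 := by
  have hG1 : ∀ z ∈ ball (0 : ℂ) 1, ‖F z * ψ z‖ ≤ 1 := fun z hz => by
    simpa [norm_mul] using mul_le_one₀ (hF1 z hz) (norm_nonneg _) (hψ1 z hz)
  cases k with
  | ofNat m =>
    have hH := ((hb.sub (hc.const_mul (conj (ψ 0)))).mul (hc.pow m)).integral_eq
      (C := (1 + ‖ψ 0‖) * 1) (by fun_prop) fun z hz => by
        rw [norm_mul, norm_pow]
        refine mul_le_mul ((norm_sub_le _ _).trans ?_) (pow_le_one₀ (norm_nonneg _) (hG1 z hz))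
          (by positivity) (by positivity)
        rw [norm_mul, RCLike.norm_conj]
        exact add_le_add (hF1 z hz) (mul_le_of_le_one_right (norm_nonneg _) (hG1 z hz))
    simpa [hF0] using hH
  | negSucc m =>
    have hΨ := hb.of_mul_left (hb1.mono fun θ h => by simp [← norm_ne_zero_iff, h]) hc
    have hH := ((hc.pow m).mul (hΨ.sub_const (ψ 0))).integral_eq
      (C := 1 * 2) (by fun_prop) fun z hz => by
        rw [norm_mul, norm_pow, ← one_add_one_eq_two]
        exact mul_le_mul (pow_le_one₀ (norm_nonneg _) (hG1 z hz)) ((norm_sub_le _ _).trans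
          (add_le_add (hψ1 z hz) (hψ1 0 (mem_ball_self one_pos)))) (by positivity) zero_le_one
    calc ∫ θ, (b θ - conj (ψ 0) * c θ) * c θ ^ Int.negSucc m ∂circleMeasure
        = ∫ θ, conj (c θ ^ m * (c θ / b θ - ψ 0)) ∂circleMeasure := by
          refine integral_congr_ae ?_
          filter_upwards [hb1, hc1] with θ hbθ hcθ
          have hb0 : b θ ≠ 0 := norm_ne_zero_iff.1 (by simp [hbθ])
          have hc0 : c θ ≠ 0 := norm_ne_zero_iff.1 (by simp [hcθ])
          simp only [zpow_negSucc, map_mul, map_pow, map_sub, map_div₀, ← inv_eq_conj hbθ,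
            ← inv_eq_conj hcθ, inv_pow]
          field_simp
          ring
      _ = 0 := by rw [integral_conj, hH]; simp

theorem exists_measurable_sphere_ae_eq {α : Type*} [MeasurableSpace α] {μ : Measure α}
    {X : α → ℂ} (hX : Measurable X) (hX1 : ∀ᵐ x ∂μ, ‖X x‖ = 1) :
    ∃ X' : α → sphere (0 : ℂ) 1, Measurable X' ∧ (fun x => (X' x : ℂ)) =ᵐ[μ] X := by
  let X₁ : α → ℂ := fun x => if ‖X x‖ = 1 then X x else 1
  have hX₁ : ∀ x, X₁ x ∈ sphere (0 : ℂ) 1 := fun x => by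
    by_cases hx : ‖X x‖ = 1 <;> simp [X₁, hx]
  refine ⟨fun x => ⟨X₁ x, hX₁ x⟩, ?_, ?_⟩
  · exact (Measurable.ite (measurableSet_eq_fun hX.norm measurable_const) hX
      measurable_const).subtype_mk
  · filter_upwards [hX1] with x hx using if_pos hx

section IntegralMulComp

variable {α K : Type*} [MeasurableSpace α] {μ : Measure α} [TopologicalSpace K] [CompactSpace K]
  [MeasurableSpace K] [OpensMeasurableSpace K] {X : α → K} {Y : α → ℂ}

theorem integrable_mul_comp_continuousMap (hX : Measurable X) (hY : Integrable Y μ)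
    (u : C(K, ℂ)) : Integrable (fun x => Y x * u (X x)) μ :=
  hY.mul_bdd (u.continuous.measurable.comp hX).aestronglyMeasurable
    (ae_of_all _ fun x => u.norm_coe_le_norm (X x))

noncomputable def integralMulCompCLM (hX : Measurable X) (hY : Integrable Y μ) :
    C(K, ℂ) →L[ℂ] ℂ :=
  LinearMap.mkContinuous
    { toFun := fun u => ∫ x, Y x * u (X x) ∂μ
      map_add' := fun u v => by
        simp only [ContinuousMap.add_apply, mul_add]
        exact integral_add (integrable_mul_comp_continuousMap hX hY u)
          (integrable_mul_comp_continuousMap hX hY v)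
      map_smul' := fun a u => by
        simp only [ContinuousMap.smul_apply, smul_eq_mul, mul_left_comm _ a, RingHom.id_apply]
        exact integral_const_mul a _ }
    (∫ x, ‖Y x‖ ∂μ) fun u => by
      refine (norm_integral_le_of_norm_le (hY.norm.mul_const ‖u‖)
        (ae_of_all _ fun _ => ?_)).trans_eq (integral_mul_const _ _)
      rw [norm_mul]
      exact mul_le_mul_of_nonneg_left (u.norm_coe_le_norm _) (norm_nonneg _)

end IntegralMulComp

theorem integral_mul_comp_eq_zero_of_forall_integral_mul_zpow_eq_zero
    {α : Type*} [MeasurableSpace α] {μ : Measure α} {X Y : α → ℂ} (hX : Measurable X)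
    (hX1 : ∀ᵐ x ∂μ, ‖X x‖ = 1) (hY : Integrable Y μ) (h : ∀ k : ℤ, ∫ x, Y x * X x ^ k ∂μ = 0)
    (g : ℂ →ᵇ ℂ) : ∫ x, Y x * g (X x) ∂μ = 0 := by
  obtain ⟨X', hX', hX'X⟩ := exists_measurable_sphere_ae_eq hX hX1
  set L := integralMulCompCLM hX' hY
  set z : C(sphere (0 : ℂ) 1, ℂ) := ContinuousMap.restrict _ (ContinuousMap.id ℂ)
  have hmonomial : ∀ a b : ℕ, L (z ^ a * star z ^ b) = 0 := fun a b => by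
    refine (integral_congr_ae ?_).trans (h (a - b))
    filter_upwards [hX'X, hX1] with x hx' hx
    have hx0 : X x ≠ 0 := norm_ne_zero_iff.1 (by simp [hx])
    simp [z, hx', ← inv_eq_conj hx, zpow_sub₀ hx0, div_eq_mul_inv]
  have hadjoin : (StarAlgebra.adjoin ℂ {z} : Set C(sphere (0 : ℂ) 1, ℂ)) ⊆ L.ker := fun u hu => by
    have hspan : u ∈ Submodule.span ℂ (Submonoid.closure ({z} ∪ star {z})) := by
      rw [← StarAlgebra.adjoin_eq_span]
      exact hu
    refine Submodule.span_le.2 (fun m hm => ?_) hspan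
    rw [star_singleton, singleton_union, SetLike.mem_coe, Submonoid.mem_closure_pair] at hm
    obtain ⟨a, b, rfl⟩ := hm
    exact hmonomial a b
  have hg : g.toContinuousMap.restrict _ ∈ L.ker := by
    refine closure_minimal hadjoin L.isClosed_ker ?_
    rw [← StarSubalgebra.topologicalClosure_coe, ← StarAlgebra.elemental,
      ContinuousMap.elemental_id_eq_top]
    trivial
  refine (integral_congr_ae ?_).trans hg
  filter_upwards [hX'X] with x hx
  simp [hx]

section CondExp

variable {α β : Type*} [MeasurableSpace α] {μ : Measure α} [MeasurableSpace β] {X : α → β}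
  {Y : α → ℂ} {C : ℝ}

theorem norm_integral_mul_comp_le (hX : AEMeasurable X μ) (hYC : ∀ᵐ x ∂μ, ‖Y x‖ ≤ C)
    {φ : β → ℂ} (hφ : Integrable φ (μ.map X)) :
    ‖∫ x, Y x * φ (X x) ∂μ‖ ≤ |C| * ∫ y, ‖φ y‖ ∂(μ.map X) := by
  rw [integral_map hX hφ.norm.aestronglyMeasurable, ← integral_const_mul]
  refine norm_integral_le_of_norm_le
    (((integrable_map_measure hφ.norm.aestronglyMeasurable hX).1 hφ.norm).const_mul _) ?_
  filter_upwards [hYC] with x hx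
  rw [norm_mul]
  exact mul_le_mul_of_nonneg_right (hx.trans (le_abs_self C)) (norm_nonneg _)

theorem condExp_comap_ae_eq_zero_of_forall_integral_mul_comp_eq_zero [IsFiniteMeasure μ]
    [PseudoMetricSpace β] [BorelSpace β] (hX : Measurable X) (hY : AEStronglyMeasurable Y μ)
    (hYC : ∀ᵐ x ∂μ, ‖Y x‖ ≤ C) (h : ∀ g : β →ᵇ ℂ, ∫ x, Y x * g (X x) ∂μ = 0) :
    μ[Y | MeasurableSpace.comap X ‹_›] =ᵐ[μ] 0 := by
  have hYi : Integrable Y μ := .of_bound hY C hYC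
  refine (ae_eq_condExp_of_forall_setIntegral_eq hX.comap_le hYi
    (fun _ _ _ => integrableOn_zero) ?_ aestronglyMeasurable_zero).symm
  rintro _ ⟨T, hT, rfl⟩ -
  set χ : β → ℂ := T.indicator 1
  have hχ : Integrable χ (μ.map X) := (integrable_const 1).indicator hT
  have hint : ∫ x in X ⁻¹' T, Y x ∂μ = ∫ x, Y x * χ (X x) ∂μ := by
    rw [← integral_indicator (hX hT)]
    congr 1 with x
    by_cases hx : X x ∈ T <;> simp [χ, hx]
  have hbound : ∀ ε > 0, ‖∫ x, Y x * χ (X x) ∂μ‖ ≤ |C| * ε := fun ε hε => by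
    obtain ⟨g, hgχ, hg⟩ := hχ.exists_boundedContinuous_integral_sub_le hε
    have hYχ : Integrable (fun x => Y x * χ (X x)) μ :=
      hYi.mul_bdd (c := 1) ((measurable_const.indicator hT).comp hX).aestronglyMeasurable
        (ae_of_all _ fun x => by by_cases hx : X x ∈ T <;> simp [χ, hx])
    have hYg : Integrable (fun x => Y x * g (X x)) μ :=
      hYi.mul_bdd (g.continuous.measurable.comp hX).aestronglyMeasurable
        (ae_of_all _ fun x => g.norm_coe_le_norm (X x))
    calc ‖∫ x, Y x * χ (X x) ∂μ‖ = ‖∫ x, Y x * (χ - g) (X x) ∂μ‖ := by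
          simp_rw [Pi.sub_apply, mul_sub]
          rw [integral_sub hYχ hYg, h g, sub_zero]
      _ ≤ |C| * ∫ y, ‖(χ - g) y‖ ∂(μ.map X) :=
          norm_integral_mul_comp_le hX.aemeasurable hYC (hχ.sub hg)
      _ ≤ |C| * ε := mul_le_mul_of_nonneg_left hgχ (abs_nonneg C)
  have hC : Tendsto (fun ε => |C| * ε) (𝓝[>] 0) (𝓝 0) := by
    simpa using ((tendsto_id (x := 𝓝 (0 : ℝ))).const_mul |C|).mono_left nhdsWithin_le_nhds
  simpa [hint, eq_comm] using ge_of_tendsto hC (eventually_nhdsWithin_of_forall hbound)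

end CondExp

theorem stmt_11 (f : ℂ → ℂ)
    (hf : DifferentiableOn ℂ f (Metric.ball 0 1))
    (hmaps : Set.MapsTo f (Metric.ball 0 1) (Metric.ball 0 1))
    (hf0 : f 0 = 0)
    (B : ℕ → ℝ → ℂ)
    (hBmeas : ∀ n, Measurable (B n))
    (hBlim : ∀ n, 1 ≤ n → ∀ᵐ (θ : ℝ) ∂circleMeasure,
      Tendsto (fun r : ℝ => f^[n] ((r : ℂ) * Complex.exp ((θ : ℂ) * Complex.I)))
        (nhdsWithin 1 (Set.Iio 1)) (nhds (B n θ)))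
    (hBinner : ∀ n, 1 ≤ n → ∀ᵐ (θ : ℝ) ∂circleMeasure, ‖B n θ‖ = 1)
    (lam : ℂ) (hlam : lam = starRingEnd ℂ (deriv f 0))
    (n : ℕ) (hn : 1 ≤ n) :
    circleMeasure[(fun θ => B n θ - lam * B (n + 1) θ) |
        MeasurableSpace.comap (B (n + 1)) inferInstance]
      =ᵐ[circleMeasure] 0 := by
  set F := f^[n]
  have hF0 : F 0 = 0 := Function.iterate_fixed hf0 n
  have hF1 : ∀ z ∈ ball (0 : ℂ) 1, ‖F z‖ ≤ 1 := fun z hz =>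
    (mem_ball_zero_iff.1 (hmaps.iterate n hz)).le
  set ψ := fun z => dslope f 0 (F z)
  have hψ : DifferentiableOn ℂ ψ (ball 0 1) :=
    ((differentiableOn_dslope (ball_mem_nhds 0 one_pos)).2 hf).comp (hf.iterate hmaps n)
      (hmaps.iterate n)
  have hψ1 : ∀ z ∈ ball (0 : ℂ) 1, ‖ψ z‖ ≤ 1 := fun z hz => by
    simpa using norm_dslope_le_div_of_mapsTo_ball hf
      (by rw [hf0]; exact hmaps.mono_right ball_subset_closedBall) (hmaps.iterate n hz)
  have hG : f^[n + 1] = fun z => F z * ψ z := funext fun z => by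
    simpa [hf0, Function.iterate_succ_apply'] using (sub_smul_dslope f 0 (F z)).symm
  have hmoments := integral_sub_conj_mul_zpow_eq_zero (hf.iterate hmaps n) hF1 hF0 hψ hψ1
    (hBlim n hn) (hG ▸ hBlim (n + 1) (by omega)) (hBinner n hn) (hBinner (n + 1) (by omega))
  have hψ0 : ψ 0 = deriv f 0 := by simp [ψ, hF0]
  rw [hψ0, ← hlam] at hmoments
  have hY : ∀ᵐ θ ∂circleMeasure, ‖B n θ - lam * B (n + 1) θ‖ ≤ 1 + ‖lam‖ := by
    filter_upwards [hBinner n hn, hBinner (n + 1) (by omega)] with θ hb hc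
    simpa [hb, hc] using norm_sub_le (B n θ) (lam * B (n + 1) θ)
  have hYm : AEStronglyMeasurable (fun θ => B n θ - lam * B (n + 1) θ) circleMeasure :=
    ((hBmeas n).sub ((hBmeas (n + 1)).const_mul lam)).aestronglyMeasurable
  exact condExp_comap_ae_eq_zero_of_forall_integral_mul_comp_eq_zero (hBmeas (n + 1)) hYm hY
    (integral_mul_comp_eq_zero_of_forall_integral_mul_zpow_eq_zero (hBmeas (n + 1))
      (hBinner (n + 1) (by omega)) (.of_bound hYm _ hY) hmoments)
end
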